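/- Let G be a graph on n vertices with n not divisible by 3 that is 3-chromatic, and let k ≥ 3 and l ≥ 1. Then the graph G ∘^l C_{2k} admits no equitable 3-coloring; in fact, any proper 3-coloring of G ∘^l C_{2k} obtained from an equitable 3-coloring of G has two color classes whose cardinalities differ by (k−1)^l. -/

import Mathlib

open SimpleGraph Finset

/-- The corona `G ∘ H` of two graphs: one copy of `G` and `|V(G)|` copies of `H`,
the `i`-th vertex of `G` being joined to every vertex of the `i`-th copy of `H`. -/
def SimpleGraph.corona {α β : Type*} (G : SimpleGraph α) (H : SimpleGraph β) :
    SimpleGraph (α ⊕ α × β) where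
  Adj x y :=
    match x, y with
    | Sum.inl u, Sum.inl v => G.Adj u v
    | Sum.inl u, Sum.inr (v, _) => u = v
    | Sum.inr (u, _), Sum.inl v => u = v
    | Sum.inr (u, a), Sum.inr (v, b) => u = v ∧ H.Adj a b
  symm := ⟨by
    rintro (u | ⟨u, a⟩) (v | ⟨v, b⟩) h
    · exact h.symm
    · exact h.symm
    · exact h.symm
    · exact ⟨h.1.symm, h.2.symm⟩⟩
  loopless := ⟨by
    rintro (u | ⟨u, a⟩) h
    · exact G.loopless.irrefl u h
    · exact H.loopless.irrefl a h.2⟩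

universe u

/-- Vertex type of the `l`-fold corona `G ∘^l H` (with `l = 0` giving `G` itself). -/
def coronaType (α β : Type u) : ℕ → Type u
  | 0 => α
  | l + 1 => coronaType α β l ⊕ coronaType α β l × β

instance coronaType.fintype (α β : Type u) [Fintype α] [Fintype β] :
    ∀ l, Fintype (coronaType α β l)
  | 0 => inferInstanceAs (Fintype α)
  | l + 1 =>
    letI := coronaType.fintype α β l
    inferInstanceAs (Fintype (coronaType α β l ⊕ coronaType α β l × β))

/-- The `l`-fold corona `G ∘^l H`, defined by `G ∘^0 H = G` and
`G ∘^(l+1) H = (G ∘^l H) ∘ H`. -/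
def coronaPow {α β : Type u} (G : SimpleGraph α) (H : SimpleGraph β) :
    ∀ l, SimpleGraph (coronaType α β l)
  | 0 => G
  | l + 1 => (coronaPow G H l).corona H

/-- The canonical copy of a vertex of `G` inside `G ∘^l H`. -/
def coronaBase {α : Type u} (β : Type u) : ∀ l, α → coronaType α β l
  | 0 => id
  | l + 1 => fun a => Sum.inl (coronaBase β l a)

/-- `c` is an equitable `k`-coloring of `G`: it is proper and any two color classes
differ in size by at most one. -/
def SimpleGraph.IsEquitableColoring {V : Type*} [Fintype V] (G : SimpleGraph V) {k : ℕ}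
    (c : V → Fin k) : Prop :=
  (∀ ⦃u v⦄, G.Adj u v → c u ≠ c v) ∧
    ∀ i j : Fin k,
      (Finset.univ.filter fun v => c v = i).card ≤
        (Finset.univ.filter fun v => c v = j).card + 1

/-- `G` is equitably `k`-colorable. -/
def SimpleGraph.EquitablyColorable {V : Type*} [Fintype V] (G : SimpleGraph V) (k : ℕ) : Prop :=
  ∃ c : V → Fin k, G.IsEquitableColoring c

/-- The equitable chromatic number: the least `k` such that `G` is equitably `k`-colorable. -/
noncomputable def SimpleGraph.equitableChromaticNumber {V : Type*} [Fintype V]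
    (G : SimpleGraph V) : ℕ :=
  sInf {k | G.EquitablyColorable k}

/-- The maximum degree of a finite graph (no decidability assumptions). -/
noncomputable def SimpleGraph.maxDeg {V : Type*} [Fintype V] (G : SimpleGraph V) : ℕ :=
  Finset.univ.sup fun v => (G.neighborSet v).ncard

/-! In a proper 3-colouring of `G ∘ C_{2k}`, the copy of `C_{2k}` hanging at a vertex of colour `x`
is properly coloured by the two other colours, so it has exactly `k` vertices of each. Hence a
colour class of `G ∘ C_{2k}` whose trace on `G` has `b` vertices has `b + k (|V(G)| - b)` vertices:
differences of class sizes are multiplied by `1 - k`, and after `l` steps class differences in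
`G ∘^l C_{2k}` are `(1 - k)^l` times those on the base copy of `G`. An equitable colouring of `G`
with `3 ∤ n` has two classes differing by exactly one, giving the difference `(k - 1)^l`; and since
`(k - 1)^l ≥ 2`, an equitable colouring of `G ∘^l C_{2k}` would force equal classes on `G`. -/

theorem Fin.two_mul_card_filter_eq_of_add_one_iff_not {n : ℕ} [NeZero n] (p : Fin n → Prop)
    [DecidablePred p] (hp : ∀ j, p (j + 1) ↔ ¬ p j) : 2 * #{j | p j} = n := by
  have hshift : #{j | ¬ p j} = #{j | p j} :=
    card_equiv (Equiv.addRight 1) fun j => by simp [hp]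
  rw [two_mul]
  nth_rw 2 [← hshift]
  simpa using card_filter_add_card_filter_not (s := (univ : Finset (Fin n))) p

theorem cycleGraph_two_mul_card_filter_eq {γ : Type*} [DecidableEq γ] {n : ℕ} (hn : n ≠ 1)
    (d : Fin n → γ) (hd : ∀ ⦃a b⦄, (cycleGraph n).Adj a b → d a ≠ d b) {y z : γ}
    (hyz : ∀ j, d j = y ∨ d j = z) : 2 * #{j | d j = y} = n := by
  obtain _ | _ | n := n
  · simp
  · contradiction
  · refine Fin.two_mul_card_filter_eq_of_add_one_iff_not _ fun j => ?_
    have hne : d j ≠ d (j + 1) := hd (Or.inr (add_sub_cancel_left j 1))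
    rcases hyz j with hj | hj <;> rcases hyz (j + 1) with hj' | hj' <;> simp_all [eq_comm]

theorem exists_forall_ne_imp_eq_or_eq_fin_three :
    ∀ x y : Fin 3, x ≠ y → ∃ z, ∀ w, w ≠ x → w = y ∨ w = z := by
  decide

section corona

variable {X : Type*} (G : SimpleGraph X) {k : ℕ} (c : X ⊕ X × Fin (2 * k) → Fin 3)

theorem corona_cycleGraph_card_filter_copy
    (hc : ∀ ⦃u v⦄, (G.corona (cycleGraph (2 * k))).Adj u v → c u ≠ c v) (x : X) (i : Fin 3) :
    #{j | c (.inr (x, j)) = i} = if c (.inl x) = i then 0 else k := by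
  have hne : ∀ j, c (.inr (x, j)) ≠ c (.inl x) := fun j =>
    (hc (u := .inl x) (v := .inr (x, j)) rfl).symm
  split_ifs with hx
  · simpa [hx] using hne
  · obtain ⟨z, hz⟩ := exists_forall_ne_imp_eq_or_eq_fin_three _ _ hx
    have := cycleGraph_two_mul_card_filter_eq (by omega) (fun j => c (.inr (x, j)))
      (fun a b hab => hc ⟨rfl, hab⟩) (fun j => hz _ (hne j))
    omega

variable [Fintype X]

theorem corona_cycleGraph_card_filter
    (hc : ∀ ⦃u v⦄, (G.corona (cycleGraph (2 * k))).Adj u v → c u ≠ c v) (i : Fin 3) :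
    #{v | c v = i} = #{x | c (.inl x) = i} + k * #{x | c (.inl x) ≠ i} := by
  have hcopies : ∑ x : X, #{j | c (.inr (x, j)) = i} = k * #{x | c (.inl x) ≠ i} := by
    simp_rw [corona_cycleGraph_card_filter_copy G c hc, sum_ite, sum_const_zero, sum_const,
      smul_eq_mul, zero_add, mul_comm]
  rw [← hcopies, card_filter, Fintype.sum_sum_type, Fintype.sum_prod_type, ← card_filter]
  simp_rw [card_filter]

theorem corona_cycleGraph_card_filter_sub
    (hc : ∀ ⦃u v⦄, (G.corona (cycleGraph (2 * k))).Adj u v → c u ≠ c v) (i j : Fin 3) :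
    (#{v | c v = i} : ℤ) - #{v | c v = j} =
      (1 - k) * ((#{x | c (.inl x) = i} : ℤ) - #{x | c (.inl x) = j}) := by
  have hcompl : ∀ i, (#{x | c (.inl x) ≠ i} : ℤ) = Fintype.card X - #{x | c (.inl x) = i} :=
    fun i => by
      rw [eq_sub_iff_add_eq, ← Nat.cast_add, add_comm, card_filter_add_card_filter_not, card_univ]
  rw [corona_cycleGraph_card_filter G c hc, corona_cycleGraph_card_filter G c hc]
  push_cast
  rw [hcompl, hcompl]
  ring

end corona

theorem coronaPow_cycleGraph_card_filter_sub {α : Type} [Fintype α] (G : SimpleGraph α) (k : ℕ) :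
    ∀ (l : ℕ) (c : coronaType α (Fin (2 * k)) l → Fin 3),
      (∀ ⦃u v⦄, (coronaPow G (cycleGraph (2 * k)) l).Adj u v → c u ≠ c v) → ∀ i j : Fin 3,
      (#{v | c v = i} : ℤ) - #{v | c v = j} =
        (1 - k) ^ l * ((#{a | c (coronaBase _ l a) = i} : ℤ) - #{a | c (coronaBase _ l a) = j})
  | 0, c, _, i, j => by simp only [pow_zero, one_mul]; rfl
  | l + 1, c, hc, i, j => by
    refine (corona_cycleGraph_card_filter_sub (coronaPow G _ l) c hc i j).trans ?_
    rw [coronaPow_cycleGraph_card_filter_sub G k l (fun v => c (.inl v))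
      (fun u v huv => hc (u := .inl u) (v := .inl v) huv), pow_succ', mul_assoc]
    rfl

section colorClasses

variable {V : Type*} [Fintype V] {m : ℕ} (c : V → Fin m)

theorem dvd_card_of_card_filter_eq (h : ∀ i j, #{v | c v = i} = #{v | c v = j}) :
    m ∣ Fintype.card V := by
  cases m with
  | zero => simp [Fintype.card_eq_zero_iff.2 ⟨fun v => (c v).elim0⟩]
  | succ m =>
    refine ⟨#{v | c v = 0}, ?_⟩
    rw [← card_univ, card_eq_sum_card_fiberwise (t := univ) fun v _ => mem_univ (c v)]
    simp only [Finset.sum_congr rfl fun i _ => h i 0, sum_const, card_univ,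
      Fintype.card_fin, smul_eq_mul]

theorem exists_card_filter_eq_add_one (h : ∀ i j, #{v | c v = i} ≤ #{v | c v = j} + 1)
    (hm : ¬ m ∣ Fintype.card V) : ∃ i j, #{v | c v = i} = #{v | c v = j} + 1 := by
  by_contra! hne
  refine hm (dvd_card_of_card_filter_eq c fun i j => ?_)
  have := h i j; have := hne i j; have := h j i; have := hne j i
  omega

end colorClasses

theorem exists_eq_add_of_abs_sub_eq {ι : Type*} (f : ι → ℕ) (i j : ι) {m : ℕ}
    (h : |(f i : ℤ) - f j| = m) : ∃ i j, f i = f j + m := by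
  rcases (abs_eq (Nat.cast_nonneg m)).1 h with h | h
  · exact ⟨i, j, by omega⟩
  · exact ⟨j, i, by omega⟩

theorem coronaPow_cycleGraph_abs_card_filter_sub {α : Type} [Fintype α] (G : SimpleGraph α)
    {k : ℕ} (hk : 1 ≤ k) (l : ℕ) (c : coronaType α (Fin (2 * k)) l → Fin 3)
    (hc : ∀ ⦃u v⦄, (coronaPow G (cycleGraph (2 * k)) l).Adj u v → c u ≠ c v) (i j : Fin 3) :
    |(#{v | c v = i} : ℤ) - #{v | c v = j}| =
      ((k - 1) ^ l : ℕ) *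
        |(#{a | c (coronaBase _ l a) = i} : ℤ) - #{a | c (coronaBase _ l a) = j}| := by
  rw [coronaPow_cycleGraph_card_filter_sub G k l c hc, abs_mul, abs_pow, abs_sub_comm,
    abs_of_nonneg (by omega)]
  push_cast [hk]
  rfl

theorem Nat.eq_of_mul_abs_sub_le_one {a b p : ℕ} (hp : 2 ≤ p) (h : (p : ℤ) * |(a : ℤ) - b| ≤ 1) :
    a = b := by
  have := abs_lt.1 (by nlinarith [abs_nonneg ((a : ℤ) - b)] : |(a : ℤ) - b| < 1)
  omega

theorem coronaPow_evenCycle_not_equitably_three_colorable_general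
    {α : Type} [Fintype α] (G : SimpleGraph α) (n k l : ℕ)
    (hn : Fintype.card α = n) (hndvd : ¬ 3 ∣ n)
    (hk : 3 ≤ k) (hl : 1 ≤ l) :
    ¬ (coronaPow G (cycleGraph (2 * k)) l).EquitablyColorable 3 ∧
    ∀ c : coronaType α (Fin (2 * k)) l → Fin 3,
      (∀ ⦃u v⦄, (coronaPow G (cycleGraph (2 * k)) l).Adj u v → c u ≠ c v) →
      G.IsEquitableColoring (fun a => c (coronaBase (Fin (2 * k)) l a)) →
      ∃ i j : Fin 3,
        (Finset.univ.filter fun v => c v = i).card =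
          (Finset.univ.filter fun v => c v = j).card + (k - 1) ^ l := by
  refine ⟨fun ⟨c, hc, hequit⟩ => hndvd ?_, fun c hc hbase => ?_⟩
  · rw [← hn]
    refine dvd_card_of_card_filter_eq (fun a => c (coronaBase _ l a)) fun i j => ?_
    have hpow : 2 ≤ (k - 1) ^ l := (Nat.le_self_pow (by omega) (k - 1)).trans' (by omega)
    refine Nat.eq_of_mul_abs_sub_le_one hpow ?_
    rw [← coronaPow_cycleGraph_abs_card_filter_sub G (by omega) l c hc]
    exact abs_sub_le_iff.2 ⟨by linarith [hequit i j], by linarith [hequit j i]⟩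
  · obtain ⟨i, j, hij⟩ := exists_card_filter_eq_add_one _ hbase.2 (hn ▸ hndvd)
    refine exists_eq_add_of_abs_sub_eq (fun i => #{v | c v = i}) i j ?_
    rw [coronaPow_cycleGraph_abs_card_filter_sub G (by omega) l c hc, hij]
    simp

/-- If `G` is 3-chromatic on `n` vertices with `3 ∤ n`, `k ≥ 3`, `l ≥ 1`,
then `G ∘^l C_{2k}` has no equitable 3-coloring; in fact every proper 3-coloring of
`G ∘^l C_{2k}` whose restriction to the base copy of `G` is an equitable 3-coloring of `G`
has two color classes whose cardinalities differ by `(k-1)^l`. -/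
theorem coronaPow_evenCycle_not_equitably_three_colorable
    {α : Type} [Fintype α] (G : SimpleGraph α) (n k l : ℕ)
    (hn : Fintype.card α = n) (hndvd : ¬ 3 ∣ n) (hchrom : G.chromaticNumber = 3)
    (hk : 3 ≤ k) (hl : 1 ≤ l) :
    ¬ (coronaPow G (cycleGraph (2 * k)) l).EquitablyColorable 3 ∧
    ∀ c : coronaType α (Fin (2 * k)) l → Fin 3,
      (∀ ⦃u v⦄, (coronaPow G (cycleGraph (2 * k)) l).Adj u v → c u ≠ c v) →
      G.IsEquitableColoring (fun a => c (coronaBase (Fin (2 * k)) l a)) →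
      ∃ i j : Fin 3,
        (Finset.univ.filter fun v => c v = i).card =
          (Finset.univ.filter fun v => c v = j).card + (k - 1) ^ l :=
  coronaPow_evenCycle_not_equitably_three_colorable_general G n k l hn hndvd hk hl
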